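/- arXiv:0707.1429 — 2 statements merged into one kernel-verified Lean document; each statement's English description precedes it below -/
import Mathlib

section
/- Let n ≥ 2 and suppose N, k₀ are integers with 1 ≤ k₀ and N(n) - 1 ≤ N ≤ n*(k₀+1) - k₀*(k₀-1)/2 and k₀ ≤ n. Then k₀ = n - 1 or k₀ = n. Moreover if k₀ = n - 1 then N = N(n) - 1, and if k₀ = n then N ∈ {N(n) - 1, N(n)}. -/
/-!
With `φ(k) = n(k+1) - k(k-1)/2`, the gap `N(n) - φ(k)` is the triangular number
`(n-k)(n-k+1)/2`. The hypotheses force this gap to be at most `1`, so `n - k ∈ {0, 1}`,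
and the value of the gap (`0` or `1`) then pins down `N`.
-/

lemma Int.even_mul_add_three (n : ℤ) : Even (n * (n + 3)) := by
  rw [show n * (n + 3) = n * (n + 1) + 2 * n by ring]
  exact (Int.even_mul_succ_self n).add (even_two_mul n)

lemma mul_add_three_div_two_sub_eq (n k : ℤ) :
    n * (n + 3) / 2 - (n * (k + 1) - k * (k - 1) / 2) = (n - k) * (n - k + 1) / 2 := by
  have hn := Int.mul_ediv_cancel' (Int.even_mul_add_three n).two_dvd
  have hk := Int.mul_ediv_cancel' (Int.even_mul_pred_self k).two_dvd
  have hd := Int.mul_ediv_cancel' (Int.even_mul_succ_self (n - k)).two_dvd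
  refine mul_left_cancel₀ (two_ne_zero (α := ℤ)) ?_
  linear_combination hn + hk - hd

lemma eq_zero_or_eq_one_of_triangle_le_one {m : ℤ} (hm : 0 ≤ m) (h : m * (m + 1) / 2 ≤ 1) :
    m = 0 ∨ m = 1 := by
  by_contra! hne
  have : 6 ≤ m * (m + 1) := by nlinarith [show 2 ≤ m by omega]
  omega

theorem defects_lemma_arith_general (n N k₀ : ℤ) (hkn : k₀ ≤ n)
    (hlow : n * (n + 3) / 2 - 1 ≤ N)
    (hup : N ≤ n * (k₀ + 1) - k₀ * (k₀ - 1) / 2) :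
    (k₀ = n - 1 ∨ k₀ = n) ∧
    (k₀ = n - 1 → N = n * (n + 3) / 2 - 1) ∧
    (k₀ = n → N = n * (n + 3) / 2 - 1 ∨ N = n * (n + 3) / 2) := by
  have hgap := mul_add_three_div_two_sub_eq n k₀
  obtain hm | hm := eq_zero_or_eq_one_of_triangle_le_one (m := n - k₀) (by omega) (by omega)
  all_goals
    rw [hm] at hgap
    norm_num at hgap
    omega

theorem defects_lemma_arith (n N k₀ : ℤ) (hn : 2 ≤ n) (hk1 : 1 ≤ k₀) (hkn : k₀ ≤ n)
    (hlow : n * (n + 3) / 2 - 1 ≤ N)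
    (hup : N ≤ n * (k₀ + 1) - k₀ * (k₀ - 1) / 2) :
    (k₀ = n - 1 ∨ k₀ = n) ∧
    (k₀ = n - 1 → N = n * (n + 3) / 2 - 1) ∧
    (k₀ = n → N = n * (n + 3) / 2 - 1 ∨ N = n * (n + 3) / 2) :=
  defects_lemma_arith_general n N k₀ hkn hlow hup
end

section
/- Let X ⊂ P^N be a smooth non-degenerate projective variety of dimension n whose defective sequence satisfies δ k ≥ δ (k-1) + k*δ 1 for all k, where dim X_{k₀} = n - (δ_{k₀} - δ_{k₀-1}) and dim X_{k₀} = N - (k₀*n + k₀ - 1 - δ_{k₀-1}) - 1 hold. Then N ≤ n*(k₀+1) - k₀*(δ 1 - 1) - δ 1 * k₀*(k₀-1)/2, with equality if and only if δ k = δ (k-1) + k*δ 1 for all 1 ≤ k ≤ k₀. -/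
/-! Comparing the two expressions for `d` gives `N = n (k₀ + 1) + k₀ - δ k₀`. Telescoping the
superadditivity steps `δ k - δ (k - 1) ≥ k δ 1` yields `δ k₀ ≥ δ 1 (1 + ⋯ + k₀)`, with equality
exactly when every step is an equality; Gauss' formula turns this into the stated bound. -/

open Finset

theorem Finset.sum_Icc_one_sub_pred {α : Type*} [AddCommGroup α] (a : ℕ → α) (m : ℕ) :
    ∑ k ∈ Icc 1 m, (a k - a (k - 1)) = a m - a 0 := by
  rw [← Ico_add_one_right_eq_Icc, sum_Ico_eq_sum_range, ← sum_range_sub]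
  refine sum_congr rfl fun k _ => ?_
  simp [add_comm]

section Telescoping

variable {α : Type*} [AddCommGroup α] [PartialOrder α] [IsOrderedAddMonoid α] {a c : ℕ → α}
  {m : ℕ}

theorem add_sum_Icc_le_of_forall_add_le (h : ∀ k, 1 ≤ k → k ≤ m → a (k - 1) + c k ≤ a k) :
    a 0 + ∑ k ∈ Icc 1 m, c k ≤ a m := by
  rw [← le_sub_iff_add_le', ← sum_Icc_one_sub_pred]
  exact sum_le_sum fun k hk => le_sub_iff_add_le'.2 (h k (mem_Icc.1 hk).1 (mem_Icc.1 hk).2)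

theorem eq_add_sum_Icc_iff_of_forall_add_le (h : ∀ k, 1 ≤ k → k ≤ m → a (k - 1) + c k ≤ a k) :
    a m = a 0 + ∑ k ∈ Icc 1 m, c k ↔ ∀ k, 1 ≤ k → k ≤ m → a k = a (k - 1) + c k := by
  rw [eq_comm, ← eq_sub_iff_add_eq', ← sum_Icc_one_sub_pred,
    sum_eq_sum_iff_of_le fun k hk => le_sub_iff_add_le'.2 (h k (mem_Icc.1 hk).1 (mem_Icc.1 hk).2)]
  simp only [mem_Icc, and_imp, eq_sub_iff_add_eq', eq_comm]

end Telescoping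

theorem sum_range_natCast_mul_two (m : ℕ) : (∑ k ∈ range m, (k : ℤ)) * 2 = m * (m - 1) := by
  induction m with
  | zero => simp
  | succ m ih => rw [sum_range_succ, add_mul, ih]; push_cast; ring

theorem sum_Icc_one_natCast_mul (b : ℤ) (m : ℕ) :
    ∑ k ∈ Icc 1 m, (k : ℤ) * b = m * b + b * m * (m - 1) / 2 := by
  have hgauss : b * m * (m - 1) = (b * ∑ k ∈ range m, (k : ℤ)) * 2 := by
    rw [mul_assoc, mul_assoc, ← sum_range_natCast_mul_two]
  rw [hgauss, Int.mul_ediv_cancel _ two_ne_zero, ← Ico_add_one_right_eq_Icc, sum_Ico_eq_sum_range,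
    Nat.add_sub_cancel]
  push_cast
  rw [mul_comm b, sum_mul]
  simp [add_mul, sum_add_distrib]

theorem addit_lemma_arith_general (n N d : ℤ) (k₀ : ℕ) (δ : ℕ → ℤ)
    (h0 : δ 0 = 0)
    (hsup : ∀ k : ℕ, 1 ≤ k → k ≤ k₀ → δ k ≥ δ (k - 1) + (k : ℤ) * δ 1)
    (hd1 : d = n - (δ k₀ - δ (k₀ - 1)))
    (hd2 : d = N - ((k₀ : ℤ) * n + (k₀ : ℤ) - 1 - δ (k₀ - 1)) - 1) :
    N ≤ n * ((k₀ : ℤ) + 1) - (k₀ : ℤ) * (δ 1 - 1) - δ 1 * (k₀ : ℤ) * ((k₀ : ℤ) - 1) / 2 ∧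
    (N = n * ((k₀ : ℤ) + 1) - (k₀ : ℤ) * (δ 1 - 1) - δ 1 * (k₀ : ℤ) * ((k₀ : ℤ) - 1) / 2 ↔
      ∀ k : ℕ, 1 ≤ k → k ≤ k₀ → δ k = δ (k - 1) + (k : ℤ) * δ 1) := by
  have hN : N = n * (k₀ + 1) + k₀ - δ k₀ := by linarith
  have hbound := add_sum_Icc_le_of_forall_add_le (c := fun k => (k : ℤ) * δ 1) hsup
  have hsharp := eq_add_sum_Icc_iff_of_forall_add_le (c := fun k => (k : ℤ) * δ 1) hsup
  rw [sum_Icc_one_natCast_mul, h0, zero_add] at hbound hsharp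
  refine ⟨by linarith, ?_⟩
  rw [← hsharp]
  constructor <;> intro h <;> linarith

theorem addit_lemma_arith (n N d : ℤ) (k₀ : ℕ) (hk : 1 ≤ k₀) (δ : ℕ → ℤ)
    (h0 : δ 0 = 0)
    (hsup : ∀ k : ℕ, 1 ≤ k → k ≤ k₀ → δ k ≥ δ (k - 1) + (k : ℤ) * δ 1)
    (hd1 : d = n - (δ k₀ - δ (k₀ - 1)))
    (hd2 : d = N - ((k₀ : ℤ) * n + (k₀ : ℤ) - 1 - δ (k₀ - 1)) - 1) :
    N ≤ n * ((k₀ : ℤ) + 1) - (k₀ : ℤ) * (δ 1 - 1) - δ 1 * (k₀ : ℤ) * ((k₀ : ℤ) - 1) / 2 ∧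
    (N = n * ((k₀ : ℤ) + 1) - (k₀ : ℤ) * (δ 1 - 1) - δ 1 * (k₀ : ℤ) * ((k₀ : ℤ) - 1) / 2 ↔
      ∀ k : ℕ, 1 ≤ k → k ≤ k₀ → δ k = δ (k - 1) + (k : ℤ) * δ 1) :=
  addit_lemma_arith_general n N d k₀ δ h0 hsup hd1 hd2
end
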